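/- arXiv:2012.06915 — 2 statements merged into one kernel-verified Lean document; each statement's English description precedes it below -/
import Mathlib

section
/- For the EWL payoff function of any 2×2 game, for every p ∈ [0,1], the convex combination p·v1(0,0,0; π/2,0,π/2) + (1−p)·v1(π,0,0; π/2,0,π/2) equals (a00 + a10)/2; i.e., every classical mixed strategy of player 1 against U(π/2,0,π/2) yields payoff (a00+a10)/2. -/
open Real

/-- Player 1's payoff in the EWL scheme for a 2×2 game with payoffs
`a00 a01 a10 a11`, at the strategy profile `(U(θ1,α1,β1), U(θ2,α2,β2))`. -/
noncomputable def ewlV1 (a00 a01 a10 a11 θ1 α1 β1 θ2 α2 β2 : ℝ) : ℝ :=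
  a00 * (cos (α1 + α2) * cos (θ1/2) * cos (θ2/2) +
         sin (β1 + β2) * sin (θ1/2) * sin (θ2/2))^2 +
  a01 * (sin (α2 - β1) * sin (θ1/2) * cos (θ2/2) +
         cos (α1 - β2) * cos (θ1/2) * sin (θ2/2))^2 +
  a10 * (cos (α2 - β1) * sin (θ1/2) * cos (θ2/2) +
         sin (α1 - β2) * cos (θ1/2) * sin (θ2/2))^2 +
  a11 * (cos (β1 + β2) * sin (θ1/2) * sin (θ2/2) -
         sin (α1 + α2) * cos (θ1/2) * cos (θ2/2))^2

lemma ewlV1_id_against_U_pi_div_two_zero_pi_div_two (a00 a01 a10 a11 : ℝ) :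
    ewlV1 a00 a01 a10 a11 0 0 0 (π/2) 0 (π/2) = (a00 + a10) / 2 := by
  have hπ : π / 2 / 2 = π / 4 := by ring
  simp only [ewlV1, hπ, zero_div, zero_add, zero_sub, cos_zero, sin_zero, cos_neg, sin_neg,
    cos_pi_div_two, sin_pi_div_two, cos_pi_div_four, sin_pi_div_four]
  ring_nf
  rw [sq_sqrt zero_le_two]
  ring

lemma ewlV1_iX_against_U_pi_div_two_zero_pi_div_two (a00 a01 a10 a11 : ℝ) :
    ewlV1 a00 a01 a10 a11 π 0 0 (π/2) 0 (π/2) = (a00 + a10) / 2 := by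
  have hπ : π / 2 / 2 = π / 4 := by ring
  simp only [ewlV1, hπ, add_zero, zero_add, sub_zero, cos_zero, sin_zero,
    cos_pi_div_two, sin_pi_div_two, cos_pi_div_four, sin_pi_div_four]
  ring_nf
  rw [sq_sqrt zero_le_two]
  ring

/-- Every classical mixed strategy of player 1 (a mixture of `U(0,0,0)` and
`U(π,0,0)`) against `U(π/2,0,π/2)` yields the payoff `(a00 + a10)/2`. -/
theorem ewl_classical_mixed_constant (a00 a01 a10 a11 : ℝ) :
    ∀ p : ℝ, p ∈ Set.Icc (0:ℝ) 1 →
      p * ewlV1 a00 a01 a10 a11 0 0 0 (π/2) 0 (π/2) +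
        (1 - p) * ewlV1 a00 a01 a10 a11 π 0 0 (π/2) 0 (π/2) =
        (a00 + a10) / 2 := by
  intro p _
  rw [ewlV1_id_against_U_pi_div_two_zero_pi_div_two,
    ewlV1_iX_against_U_pi_div_two_zero_pi_div_two]
  ring
end

section
/- In the EWL game on Matching Pennies restricted to the strategy sets D1 = D2 = {U(θ,0,0) : θ ∈ [0,π]} ∪ {U(π/2,0,−π/2)}, there is no pure Nash equilibrium. -/
/-!
Player 1 can answer any strategy of player 2 with a payoff of at least `0` (play `θ = 0` or `θ = π`
to match the sign of `cos θ₂`, or `θ = 0` against the quantum strategy), while player 2 can answer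
any strategy of player 1 with a payoff below `0` for player 1 (`θ = π/2` against the quantum
strategy, otherwise `θ = 0` or `θ = π` if `cos θ₁ ≠ 0`, and the quantum strategy if `sin θ₁ > 0`;
one of the two holds since `sin² + cos² = 1`). At an equilibrium the payoff would have to be both.
-/

open Real

/-- A strategy in the restricted EWL Matching Pennies game: `some θ` stands for
the one-parameter operator `U(θ,0,0)` (with `θ ∈ [0,π]`), and `none` stands for
the quantum strategy `U(π/2,0,−π/2)`. -/
def ValidStrat (s : Option ℝ) : Prop := s.elim True (fun θ => θ ∈ Set.Icc 0 π)

/-- Player 1's payoff in the EWL Matching Pennies game on the restricted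
strategy sets `{U(θ,0,0) : θ ∈ [0,π]} ∪ {U(π/2,0,−π/2)}`. -/
noncomputable def mpPay : Option ℝ → Option ℝ → ℝ
  | some θ1, some θ2 => cos θ1 * cos θ2
  | some θ1, none => -sin θ1
  | none, some θ2 => -sin θ2
  | none, none => 0

lemma zero_mem_Icc_zero_pi : (0 : ℝ) ∈ Set.Icc 0 π := ⟨le_rfl, pi_nonneg⟩

lemma exists_mem_Icc_cos_mul_eq_abs (x : ℝ) : ∃ θ ∈ Set.Icc 0 π, cos θ * x = |x| := by
  rcases le_total 0 x with hx | hx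
  · exact ⟨0, zero_mem_Icc_zero_pi, by rw [cos_zero, one_mul, abs_of_nonneg hx]⟩
  · exact ⟨π, ⟨pi_nonneg, le_rfl⟩, by rw [cos_pi, neg_one_mul, abs_of_nonpos hx]⟩

lemma exists_mpPay_nonneg (s2 : Option ℝ) : ∃ s1, ValidStrat s1 ∧ 0 ≤ mpPay s1 s2 := by
  cases s2 with
  | none => exact ⟨some 0, zero_mem_Icc_zero_pi, by simp [mpPay]⟩
  | some θ2 =>
    obtain ⟨θ1, hθ1, hcos⟩ := exists_mem_Icc_cos_mul_eq_abs (cos θ2)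
    exact ⟨some θ1, hθ1, by simp only [mpPay, hcos, abs_nonneg]⟩

lemma exists_mpPay_neg {s1 : Option ℝ} (hs1 : ValidStrat s1) :
    ∃ s2, ValidStrat s2 ∧ mpPay s1 s2 < 0 := by
  cases s1 with
  | none =>
    have hhalf : π / 2 ∈ Set.Icc 0 π := ⟨by positivity, by linarith [pi_pos]⟩
    exact ⟨some (π / 2), hhalf, by simp [mpPay]⟩
  | some θ1 =>
    have hsin : 0 ≤ sin θ1 := sin_nonneg_of_nonneg_of_le_pi hs1.1 hs1.2
    rcases hsin.lt_or_eq with hsin | hsin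
    · exact ⟨none, trivial, by simpa [mpPay] using hsin⟩
    · have hcos : cos θ1 ≠ 0 := fun h => by simpa [← hsin, h] using sin_sq_add_cos_sq θ1
      obtain ⟨θ2, hθ2, hneg⟩ := exists_mem_Icc_cos_mul_eq_abs (-cos θ1)
      refine ⟨some θ2, hθ2, ?_⟩
      have : cos θ1 * cos θ2 = -|cos θ1| := by linarith [abs_neg (cos θ1)]
      simpa [mpPay, this] using hcos

/-- The EWL Matching Pennies game on these restricted strategy sets has no pure
Nash equilibrium (player 2's payoff is the negative of player 1's). -/
theorem ewl_matching_pennies_no_pure_nash :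
    ¬ ∃ s1 s2 : Option ℝ, ValidStrat s1 ∧ ValidStrat s2 ∧
      (∀ s1', ValidStrat s1' → mpPay s1' s2 ≤ mpPay s1 s2) ∧
      (∀ s2', ValidStrat s2' → -(mpPay s1 s2') ≤ -(mpPay s1 s2)) := by
  rintro ⟨s1, s2, hs1, -, hbest1, hbest2⟩
  obtain ⟨s1', hs1', hnonneg⟩ := exists_mpPay_nonneg s2
  obtain ⟨s2', hs2', hneg⟩ := exists_mpPay_neg hs1
  linarith [hbest1 s1' hs1', hbest2 s2' hs2']
end
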